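/- Let d ≥ 1 and let ψ : ℝ^d → ℝ^d be twice continuously differentiable with ‖Dψ(x)‖ ≤ c < 1 and ‖D²ψ(x)‖ ≤ K for all x ∈ ℝ^d (operator norms), and suppose φ(x) = x + ψ(x) is bijective. Then φ⁻¹ is twice differentiable and its second derivative satisfies ‖D²(φ⁻¹)(y)‖ ≤ K (1 − c)⁻³ for every y ∈ ℝ^d. -/

import Mathlib

/-!
Since `‖Dψ‖ ≤ c < 1`, the map `φ = id + ψ` expands distances by at least `1 - c`, so its inverse
`g` is Lipschitz, hence continuous, and the inverse function rule gives
`Dg(y) = B := (1 + Dψ(g y))⁻¹`, with `‖B‖ ≤ (1 - c)⁻¹` by the Neumann series. Differentiating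
`y ↦ (1 + Dψ(g y))⁻¹` with the derivative `T ↦ -B T B` of inversion and the chain rule gives
`D²g(y) v = -B (D²ψ(g y) (B v)) B`, whose norm is at most `K (1 - c)⁻³`.
-/

open Function ContinuousLinearMap Filter
open scoped NNReal

theorem norm_ringInverse_one_add_le {R : Type*} [NormedRing R] [HasSummableGeomSeries R]
    (h1 : ‖(1 : R)‖ ≤ 1) {x : R} {c : ℝ} (hx : ‖x‖ ≤ c) (hc : c < 1) :
    ‖Ring.inverse (1 + x)‖ ≤ (1 - c)⁻¹ := by
  have hx1 : ‖-x‖ < 1 := by rw [norm_neg]; linarith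
  have hinv : (1 - ‖x‖)⁻¹ ≤ (1 - c)⁻¹ := inv_anti₀ (by linarith) (by linarith)
  rw [← sub_neg_eq_add, ← geom_series_eq_inverse _ hx1]
  calc _ ≤ ‖(1 : R)‖ - 1 + (1 - ‖-x‖)⁻¹ := tsum_geometric_le_of_norm_lt_one _ hx1
    _ ≤ (1 - c)⁻¹ := by rw [norm_neg]; linarith

theorem isUnit_one_add_of_norm_lt_one {R : Type*} [NormedRing R] [HasSummableGeomSeries R]
    {x : R} (hx : ‖x‖ < 1) : IsUnit (1 + x) := by
  simpa using isUnit_one_sub_of_norm_lt_one (x := -x) (by rwa [norm_neg])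

section

variable {𝕜 E : Type*} [NontriviallyNormedField 𝕜] [NormedAddCommGroup E] [NormedSpace 𝕜 E]

theorem HasFDerivAt.ringInverse {R : Type*} [NormedRing R] [HasSummableGeomSeries R]
    [NormedAlgebra 𝕜 R] {h : E → R} {h' : E →L[𝕜] R} {z : E}
    (hh : HasFDerivAt h h' z) (hz : IsUnit (h z)) :
    HasFDerivAt (fun x => Ring.inverse (h x))
      ((-mulLeftRight 𝕜 R (Ring.inverse (h z)) (Ring.inverse (h z))).comp h') z := by
  obtain ⟨u, hu⟩ := hz
  rw [← hu, Ring.inverse_unit]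
  exact (hu ▸ hasFDerivAt_ringInverse u : HasFDerivAt Ring.inverse _ (h z)).comp z hh

theorem HasFDerivAt.of_rightInverse_of_isUnit [CompleteSpace E] {f g : E → E} {f' : E →L[𝕜] E}
    {y : E} (hfg : RightInverse g f) (hg : ContinuousAt g y) (hf : HasFDerivAt f f' (g y))
    (hf' : IsUnit f') : HasFDerivAt g (Ring.inverse f') y := by
  obtain ⟨u, rfl⟩ := hf'
  rw [Ring.inverse_unit]
  exact HasFDerivAt.of_local_left_inverse (f' := ContinuousLinearEquiv.unitsEquiv 𝕜 E u) hg hf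
    (Eventually.of_forall hfg)

end

section

variable {E : Type*} [SeminormedAddCommGroup E]

theorem continuous_of_rightInverse_id_add {ψ g : E → E} {C : ℝ≥0} (hψ : LipschitzWith C ψ)
    (hC : C < 1) (hg : RightInverse g (fun x => x + ψ x)) : Continuous g :=
  ((AntilipschitzWith.id.add_lipschitzWith hψ (by simpa using hC)).to_rightInverse hg).continuous

end

section

variable {𝕜 E : Type*} [RCLike 𝕜] [NormedAddCommGroup E] [NormedSpace 𝕜 E] [CompleteSpace E]
  {ψ g : E → E} {c : ℝ}

theorem hasFDerivAt_rightInverse_id_add (hψ : Differentiable 𝕜 ψ)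
    (hDψ : ∀ x, ‖fderiv 𝕜 ψ x‖ ≤ c) (hc : c < 1) (hg : RightInverse g (fun x => x + ψ x))
    (y : E) : HasFDerivAt g (Ring.inverse (1 + fderiv 𝕜 ψ (g y))) y := by
  have hlip : LipschitzWith c.toNNReal ψ := lipschitzWith_of_nnnorm_fderiv_le hψ fun x => by
    rw [← norm_toNNReal]; exact Real.toNNReal_le_toNNReal (hDψ x)
  have hcont := continuous_of_rightInverse_id_add hlip (Real.toNNReal_lt_one.2 hc) hg
  exact .of_rightInverse_of_isUnit hg hcont.continuousAt
    ((hasFDerivAt_id _).add (hψ _).hasFDerivAt)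
    (isUnit_one_add_of_norm_lt_one ((hDψ _).trans_lt hc))

theorem hasFDerivAt_fderiv_rightInverse_id_add (hψ : ContDiff 𝕜 2 ψ)
    (hDψ : ∀ x, ‖fderiv 𝕜 ψ x‖ ≤ c) (hc : c < 1) (hg : RightInverse g (fun x => x + ψ x))
    (y : E) :
    HasFDerivAt (fderiv 𝕜 g)
      ((-mulLeftRight 𝕜 (E →L[𝕜] E) (Ring.inverse (1 + fderiv 𝕜 ψ (g y)))
          (Ring.inverse (1 + fderiv 𝕜 ψ (g y)))).comp
        ((fderiv 𝕜 (fderiv 𝕜 ψ) (g y)).comp (Ring.inverse (1 + fderiv 𝕜 ψ (g y))))) y := by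
  have hDg := hasFDerivAt_rightInverse_id_add (hψ.differentiable two_ne_zero) hDψ hc hg
  have hD2ψ : Differentiable 𝕜 (fderiv 𝕜 ψ) :=
    (hψ.fderiv_right le_rfl).differentiable one_ne_zero
  rw [funext fun y => (hDg y).fderiv]
  exact (((hD2ψ (g y)).hasFDerivAt.comp y (hDg y)).const_add 1).ringInverse
    (isUnit_one_add_of_norm_lt_one ((hDψ _).trans_lt hc))

end

theorem inverse_second_derivative_bound_general
    (d : ℕ)
    (ψ : EuclideanSpace ℝ (Fin d) → EuclideanSpace ℝ (Fin d))
    (hψ : ContDiff ℝ 2 ψ)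
    (c : ℝ) (hc1 : c < 1)
    (hDψ : ∀ x, ‖fderiv ℝ ψ x‖ ≤ c)
    (K : ℝ)
    (hD2ψ : ∀ x, ‖fderiv ℝ (fderiv ℝ ψ) x‖ ≤ K)
    (φ : EuclideanSpace ℝ (Fin d) → EuclideanSpace ℝ (Fin d))
    (hφ : ∀ x, φ x = x + ψ x)
    (hbij : Function.Bijective φ) :
    Differentiable ℝ (Function.invFun φ) ∧
    Differentiable ℝ (fderiv ℝ (Function.invFun φ)) ∧
    ∀ y, ‖fderiv ℝ (fderiv ℝ (Function.invFun φ)) y‖ ≤ K * ((1 - c)⁻¹) ^ 3 := by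
  obtain rfl : φ = fun x => x + ψ x := funext hφ
  have hg := rightInverse_invFun hbij.surjective
  have hDg := hasFDerivAt_rightInverse_id_add (hψ.differentiable two_ne_zero) hDψ hc1 hg
  have hD2g := hasFDerivAt_fderiv_rightInverse_id_add hψ hDψ hc1 hg
  refine ⟨fun y => (hDg y).differentiableAt, fun y => (hD2g y).differentiableAt, fun y => ?_⟩
  set B := Ring.inverse (1 + fderiv ℝ ψ (invFun (fun x => x + ψ x) y))
  have hB : ‖B‖ ≤ (1 - c)⁻¹ := norm_ringInverse_one_add_le norm_id_le (hDψ _) hc1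
  have hc0 : 0 ≤ (1 - c)⁻¹ := inv_nonneg.2 (by linarith)
  have hK : 0 ≤ K := (norm_nonneg (fderiv ℝ (fderiv ℝ ψ) 0)).trans (hD2ψ 0)
  rw [(hD2g y).fderiv]
  calc _ ≤ ‖B‖ * ‖B‖ * (‖fderiv ℝ (fderiv ℝ ψ) (invFun (fun x => x + ψ x) y)‖ * ‖B‖) := by
        refine (opNorm_comp_le _ _).trans ?_
        rw [norm_neg]
        gcongr
        exacts [opNorm_mulLeftRight_apply_apply_le _ _ _ _, opNorm_comp_le _ _]
    _ ≤ (1 - c)⁻¹ * (1 - c)⁻¹ * (K * (1 - c)⁻¹) := by gcongr; exact hD2ψ _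
    _ = K * ((1 - c)⁻¹) ^ 3 := by ring

/-- If `ψ : ℝ^d → ℝ^d` is `C²` with `‖Dψ(x)‖ ≤ c < 1` and `‖D²ψ(x)‖ ≤ K`
everywhere, and `φ = id + ψ` is bijective, then `φ⁻¹` is twice differentiable and
`‖D²(φ⁻¹)(y)‖ ≤ K (1-c)⁻³` for every `y`. -/
theorem inverse_second_derivative_bound
    (d : ℕ) (hd : 1 ≤ d)
    (ψ : EuclideanSpace ℝ (Fin d) → EuclideanSpace ℝ (Fin d))
    (hψ : ContDiff ℝ 2 ψ)
    (c : ℝ) (hc0 : 0 ≤ c) (hc1 : c < 1)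
    (hDψ : ∀ x, ‖fderiv ℝ ψ x‖ ≤ c)
    (K : ℝ)
    (hD2ψ : ∀ x, ‖fderiv ℝ (fderiv ℝ ψ) x‖ ≤ K)
    (φ : EuclideanSpace ℝ (Fin d) → EuclideanSpace ℝ (Fin d))
    (hφ : ∀ x, φ x = x + ψ x)
    (hbij : Function.Bijective φ) :
    Differentiable ℝ (Function.invFun φ) ∧
    Differentiable ℝ (fderiv ℝ (Function.invFun φ)) ∧
    ∀ y, ‖fderiv ℝ (fderiv ℝ (Function.invFun φ)) y‖ ≤ K * ((1 - c)⁻¹) ^ 3 :=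
  inverse_second_derivative_bound_general d ψ hψ c hc1 hDψ K hD2ψ φ hφ hbij
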